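/- arXiv:1806.06039 — 8 statements merged into one kernel-verified Lean document; each statement's English description precedes it below -/
import Mathlib

section
/- Let A ∈ B^{n×n} be a matrix over the max-min algebra. For each i ∈ {1,...,n}, the vector min((A^+)_{ii}, ·) applied entrywise to the i-th column of A^*, i.e. the vector with entries min((A^+)_{ii}, (A^*)_{ki}) for k = 1,...,n, is a principal eigenvector of A, i.e. satisfies A ⊗ x = x. -/
noncomputable section

/-- The max-min algebra: the unit interval `[0,1] ⊆ ℝ` with `⊕ = max = ⊔` and `⊗ = min = ⊓`. -/
abbrev B : Type := unitInterval

instance : Fact ((0:ℝ) ≤ 1) := ⟨zero_le_one⟩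

/-- Max-min matrix-vector product: `(A ⊗ x)_i = max_j min (A i j) (x j)`. -/
def mmVec {α β : Type*} (A : Matrix α β B) (x : β → B) : α → B :=
  fun i => ⨆ j, A i j ⊓ x j

/-- Max-min matrix-matrix product. -/
def mmMul {α β γ : Type*} (A : Matrix α β B) (C : Matrix β γ B) : Matrix α γ B :=
  fun i k => ⨆ j, A i j ⊓ C j k

/-- The max-min identity matrix. -/
def mmId (α : Type*) [DecidableEq α] : Matrix α α B :=
  fun i j => if i = j then 1 else 0

/-- Max-min matrix powers, `A^0 = I`. -/
def mmPow {α : Type*} [DecidableEq α] (A : Matrix α α B) : ℕ → Matrix α α B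
  | 0 => mmId α
  | k + 1 => mmMul A (mmPow A k)

/-- The metric matrix `A⁺ = A ⊕ A² ⊕ ... ⊕ Aⁿ`. -/
def mmPlus {α : Type*} [Fintype α] [DecidableEq α] (A : Matrix α α B) : Matrix α α B :=
  fun i j => ⨆ k ∈ Finset.Icc 1 (Fintype.card α), mmPow A k i j

/-- The Kleene star `A* = I ⊕ A ⊕ ... ⊕ A^{n-1}`. -/
def mmStar {α : Type*} [Fintype α] [DecidableEq α] (A : Matrix α α B) : Matrix α α B :=
  fun i j => ⨆ k ∈ Finset.range (Fintype.card α), mmPow A k i j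

/-!
Over the max-min algebra, `A ⊗ A* = A⁺` by distributivity, so with `c = (A⁺)ᵢᵢ` the image of
`x = c ⊓ (A*)_{·i}` is `c ⊓ (A⁺)_{·i}`. Off the diagonal `A*` and `A⁺` agree, because a walk of
length at least `n` repeats a vertex and cutting out the cycle does not lower its weight
(the weight is a minimum); on the diagonal both sides equal `c`.
-/

namespace MaxMin

lemma mmVec_inf_left {α β : Type*} (C : Matrix α β B) (c : B) (x : β → B) (k : α) :
    mmVec C (fun j => c ⊓ x j) k = c ⊓ mmVec C x k := by
  simp only [mmVec, inf_iSup_eq, inf_left_comm]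

section

variable {α : Type*} (A : Matrix α α B)

/-- A walk of length `m` is encoded by `p : ℕ → α`, of which only `p 0, …, p m` matter. -/
def walkWeight (m : ℕ) (p : ℕ → α) : B := ⨅ t ∈ Finset.range m, A (p t) (p (t + 1))

lemma walkWeight_le_apply {m t : ℕ} (ht : t < m) (p : ℕ → α) :
    walkWeight A m p ≤ A (p t) (p (t + 1)) :=
  iInf₂_le (f := fun t (_ : t ∈ Finset.range m) => A (p t) (p (t + 1))) t
    (Finset.mem_range.mpr ht)

/-- Cutting out the closed subwalk between two visits `s < t` of the same vertex. -/
lemma exists_walkWeight_le_of_eq {m s t : ℕ} (hst : s < t) (htm : t ≤ m) (p : ℕ → α)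
    (hp : p s = p t) :
    ∃ q : ℕ → α, q 0 = p 0 ∧ q (m - (t - s)) = p m ∧
      walkWeight A m p ≤ walkWeight A (m - (t - s)) q := by
  refine ⟨fun u => if u ≤ s then p u else p (u + (t - s)), by simp, ?_, ?_⟩
  · by_cases h : m - (t - s) ≤ s
    · have hms : m - (t - s) = s := by omega
      dsimp only
      rw [if_pos h, hms, hp]
      congr 1
      omega
    · dsimp only
      rw [if_neg h]
      congr 1
      omega
  · refine le_iInf₂ fun u hu => ?_
    have hu : u < m - (t - s) := Finset.mem_range.mp hu
    by_cases h1 : u + 1 ≤ s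
    · simpa [h1, Nat.le_of_succ_le h1] using walkWeight_le_apply A (by omega : u < m) p
    by_cases h2 : u ≤ s
    · obtain rfl : u = s := by omega
      have e : u + 1 + (t - u) = t + 1 := by omega
      simpa [h1, hp, e] using walkWeight_le_apply A (by omega : t < m) p
    · have e : u + 1 + (t - s) = u + (t - s) + 1 := by omega
      simpa [h1, h2, e] using walkWeight_le_apply A (by omega : u + (t - s) < m) p

variable [DecidableEq α]

lemma mmPow_zero_apply_self (k : α) : mmPow A 0 k k = ⊤ := if_pos rfl

lemma mmPow_zero_apply_of_ne {k j : α} (h : k ≠ j) : mmPow A 0 k j = ⊥ := if_neg h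

lemma walkWeight_le_mmPow (m : ℕ) (p : ℕ → α) : walkWeight A m p ≤ mmPow A m (p 0) (p m) := by
  induction m generalizing p with
  | zero => simp [mmPow_zero_apply_self]
  | succ m ih =>
    have first_edge : walkWeight A (m + 1) p ≤ A (p 0) (p 1) :=
      walkWeight_le_apply A m.succ_pos p
    have tail : walkWeight A (m + 1) p ≤ walkWeight A m (fun t => p (t + 1)) :=
      le_iInf₂ fun t ht => walkWeight_le_apply A (by simpa using ht) p
    calc walkWeight A (m + 1) p ≤ A (p 0) (p 1) ⊓ mmPow A m (p 1) (p (m + 1)) :=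
          le_inf first_edge (tail.trans (ih _))
      _ ≤ mmPow A (m + 1) (p 0) (p (m + 1)) :=
          le_iSup (fun l => A (p 0) l ⊓ mmPow A m l (p (m + 1))) (p 1)

lemma mmPow_le_iSup_walkWeight (m : ℕ) (k j : α) :
    mmPow A m k j ≤ ⨆ (p : ℕ → α) (_ : p 0 = k ∧ p m = j), walkWeight A m p := by
  induction m generalizing k with
  | zero =>
    by_cases h : k = j
    · subst h
      exact le_iSup₂_of_le (fun _ => k) ⟨rfl, rfl⟩ (by simp [walkWeight])
    · simp [mmPow_zero_apply_of_ne A h]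
  | succ m ih =>
    refine iSup_le fun l => (inf_le_inf_left _ (ih l)).trans ?_
    simp only [inf_iSup_eq]
    refine iSup₂_le fun p hp => ?_
    let q : ℕ → α := fun t => if t = 0 then k else p (t - 1)
    have hq : q 0 = k ∧ q (m + 1) = j := ⟨if_pos rfl, by simpa [q] using hp.2⟩
    refine le_iSup₂_of_le q hq (le_iInf₂ fun t ht => ?_)
    rcases t with _ | s
    · simp [q, hp.1]
    · simpa [q] using inf_le_right.trans (walkWeight_le_apply A (by simpa using ht) p)

variable [Fintype α]

lemma mmPow_le_mmStar_of_lt {m : ℕ} (hm : m < Fintype.card α) (k j : α) :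
    mmPow A m k j ≤ mmStar A k j :=
  le_iSup₂_of_le (f := fun m (_ : m ∈ Finset.range (Fintype.card α)) => mmPow A m k j) m
    (Finset.mem_range.mpr hm) le_rfl

lemma walkWeight_le_mmStar (m : ℕ) (p : ℕ → α) : walkWeight A m p ≤ mmStar A (p 0) (p m) := by
  induction m using Nat.strong_induction_on generalizing p with
  | _ m ih =>
    by_cases hm : m < Fintype.card α
    · exact (walkWeight_le_mmPow A m p).trans (mmPow_le_mmStar_of_lt A hm _ _)
    have shortcut : ∀ s t : ℕ, s < t → t ≤ m → p s = p t →
        walkWeight A m p ≤ mmStar A (p 0) (p m) := by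
      intro s t hst htm hpe
      obtain ⟨q, hq0, hqm, hw⟩ := exists_walkWeight_le_of_eq A hst htm p hpe
      simpa [hq0, hqm] using hw.trans (ih (m - (t - s)) (by omega) q)
    obtain ⟨a, b, hab, hpe⟩ := Fintype.exists_ne_map_eq_of_card_lt (fun x : Fin (m + 1) => p x)
      (by simp only [Fintype.card_fin]; omega)
    rcases Fin.lt_or_lt_of_ne hab with h | h
    · exact shortcut a b h (Nat.lt_succ_iff.mp b.isLt) hpe
    · exact shortcut b a h (Nat.lt_succ_iff.mp a.isLt) hpe.symm

lemma mmPow_le_mmStar (m : ℕ) (k j : α) : mmPow A m k j ≤ mmStar A k j :=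
  (mmPow_le_iSup_walkWeight A m k j).trans <| iSup₂_le fun p hp => by
    simpa [hp.1, hp.2] using walkWeight_le_mmStar A m p

lemma mmPow_le_mmPlus {m : ℕ} (h1 : 1 ≤ m) (hm : m ≤ Fintype.card α) (k j : α) :
    mmPow A m k j ≤ mmPlus A k j :=
  le_iSup₂_of_le (f := fun m (_ : m ∈ Finset.Icc 1 (Fintype.card α)) => mmPow A m k j) m
    (Finset.mem_Icc.mpr ⟨h1, hm⟩) le_rfl

lemma mmPlus_le_mmStar (k j : α) : mmPlus A k j ≤ mmStar A k j :=
  iSup₂_le fun m _ => mmPow_le_mmStar A m k j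

lemma mmStar_le_mmPlus_of_ne {k j : α} (h : k ≠ j) : mmStar A k j ≤ mmPlus A k j := by
  refine iSup₂_le fun m hm => ?_
  rcases m with _ | m
  · simp [mmPow_zero_apply_of_ne A h]
  · exact mmPow_le_mmPlus A m.succ_pos (Finset.mem_range.mp hm).le k j

lemma inf_mmStar_eq_inf_mmPlus (i k : α) :
    mmPlus A i i ⊓ mmStar A k i = mmPlus A i i ⊓ mmPlus A k i := by
  by_cases h : k = i
  · subst h
    rw [inf_eq_left.mpr (mmPlus_le_mmStar A k k), inf_idem]
  · exact le_antisymm (inf_le_inf_left _ (mmStar_le_mmPlus_of_ne A h))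
      (inf_le_inf_left _ (mmPlus_le_mmStar A k i))

lemma mmVec_mmStar_col (i k : α) : mmVec A (fun j => mmStar A j i) k = mmPlus A k i := by
  refine le_antisymm (iSup_le fun j => ?_) (iSup₂_le fun m hm => ?_)
  · dsimp only [mmStar]
    rw [inf_iSup₂_eq]
    refine iSup₂_le fun m hm => le_trans ?_ <|
      mmPow_le_mmPlus A m.succ_pos (Finset.mem_range.mp hm) k i
    exact le_iSup (fun l => A k l ⊓ mmPow A m l i) j
  · obtain ⟨m, rfl⟩ := Nat.exists_eq_add_of_le' (Finset.mem_Icc.mp hm).1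
    refine iSup_le fun j => le_iSup_of_le j (inf_le_inf_left _ ?_)
    exact mmPow_le_mmStar_of_lt A (by simpa using hm) j i

end

end MaxMin

open MaxMin in
/-- For each `i`, the vector with entries `min ((A⁺)_{ii}, (A*)_{ki})`,
`k = 1,...,n`, is a principal eigenvector of `A`, i.e. satisfies `A ⊗ x = x`. -/
theorem stmt2 {n : ℕ} (A : Matrix (Fin n) (Fin n) B) (i : Fin n) :
    mmVec A (fun k => mmPlus A i i ⊓ mmStar A k i) = fun k => mmPlus A i i ⊓ mmStar A k i := by
  funext k
  rw [mmVec_inf_left, mmVec_mmStar_col, inf_mmStar_eq_inf_mmPlus]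
end
end

section
/- Let A ∈ B^{n×n} be a matrix over the max-min algebra. The set of principal eigenvectors of A (vectors x with A ⊗ x = x) equals the max-min column space generated by the vectors min((A^+)_{ii}, ·) ⊗ (A^*)_{·i}: that is, x satisfies A ⊗ x = x if and only if there exists y ∈ B^n such that x_k = max_{1≤i≤n} min(y_i, (A^+)_{ii}, (A^*)_{ki}) for all k. Moreover, for every principal eigenvector x one may take y = x, i.e. x_k = max_{1≤i≤n} min(x_i, (A^+)_{ii}, (A^*)_{ki}) for all k. -/
noncomputable section

/-!
If `A ⊗ x = x` then `x = Aⁿ ⊗ x`. A walk of length `n = |α|` visits some vertex `a` twice, so it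
splits into a walk `k → a` of length `< n`, a cycle at `a` of length at most `n`, and a walk
`a → j`; in the max-min algebra the last piece met with `x j` stays below `x a`, which gives
`x k ≤ ⨆ a, x a ⊓ A⁺ a a ⊓ A* k a`. Cutting out such cycles also shows `Aᵐ ≤ A*` for every `m`,
so `A⁺ ≤ A*`; together with `A ⊗ A* = A⁺` this makes every vector of the form
`⨆ i, y i ⊓ A⁺ i i ⊓ A* · i` an eigenvector.
-/

section Algebra

variable {α β γ δ : Type*}

lemma mmVec_mmMul (A : Matrix α β B) (C : Matrix β γ B) (x : γ → B) :
    mmVec (mmMul A C) x = mmVec A (mmVec C x) := by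
  funext i
  simp only [mmVec, mmMul, iSup_inf_eq, inf_iSup_eq, inf_assoc]
  exact iSup_comm

lemma mmMul_assoc (A : Matrix α β B) (C : Matrix β γ B) (D : Matrix γ δ B) :
    mmMul (mmMul A C) D = mmMul A (mmMul C D) := by
  funext i l
  exact congrFun (mmVec_mmMul A C fun k => D k l) i

lemma mmVec_mmId [DecidableEq α] (x : α → B) : mmVec (mmId α) x = x := by
  funext i
  refine le_antisymm (iSup_le fun j => ?_) (le_iSup_of_le i (by simp [mmId]; exact le_top))
  by_cases h : i = j
  · subst h; exact inf_le_right
  · simp [mmId, h]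

lemma mmId_mmMul [DecidableEq α] (C : Matrix α β B) : mmMul (mmId α) C = C := by
  funext i l
  exact congrFun (mmVec_mmId fun k => C k l) i

lemma mmPow_add [DecidableEq α] (A : Matrix α α B) (a b : ℕ) :
    mmPow A (a + b) = mmMul (mmPow A a) (mmPow A b) := by
  induction a with
  | zero => rw [zero_add]; exact (mmId_mmMul _).symm
  | succ a ih =>
    rw [Nat.succ_add]
    show mmMul A (mmPow A (a + b)) = mmMul (mmMul A (mmPow A a)) (mmPow A b)
    rw [ih, mmMul_assoc]

lemma mmPow_inf_mmPow_le [DecidableEq α] (A : Matrix α α B) (a b : ℕ) (k l j : α) :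
    mmPow A a k l ⊓ mmPow A b l j ≤ mmPow A (a + b) k j := by
  rw [mmPow_add]
  exact le_iSup (fun l => mmPow A a k l ⊓ mmPow A b l j) l

end Algebra

section Walks

variable {α : Type*} (A : Matrix α α B)

def walkWeight : (ℕ → α) → ℕ → B
  | _, 0 => ⊤
  | p, d + 1 => A (p 0) (p 1) ⊓ walkWeight (fun r => p (r + 1)) d

lemma walkWeight_add (p : ℕ → α) (a b : ℕ) :
    walkWeight A p (a + b) = walkWeight A p a ⊓ walkWeight A (fun r => p (a + r)) b := by
  induction a generalizing p with
  | zero => simp [walkWeight]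
  | succ a ih =>
    rw [Nat.succ_add, walkWeight, walkWeight, ih, inf_assoc]
    simp only [Nat.add_right_comm _ 1]

variable [DecidableEq α]

lemma walkWeight_le_mmPow (p : ℕ → α) (d : ℕ) : walkWeight A p d ≤ mmPow A d (p 0) (p d) := by
  induction d generalizing p with
  | zero => simp [walkWeight, mmPow, mmId]; rfl
  | succ d ih =>
    calc walkWeight A p (d + 1) ≤ A (p 0) (p 1) ⊓ mmPow A d (p 1) (p (d + 1)) :=
          inf_le_inf_left _ (ih fun r => p (r + 1))
      _ ≤ mmPow A (d + 1) (p 0) (p (d + 1)) :=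
          le_iSup (fun t => A (p 0) t ⊓ mmPow A d t (p (d + 1))) (p 1)

lemma mmPow_eq_iSup_walkWeight (d : ℕ) (k j : α) :
    mmPow A d k j = ⨆ (p : ℕ → α) (_ : p 0 = k) (_ : p d = j), walkWeight A p d := by
  refine le_antisymm ?_ (iSup_le fun p => iSup_le fun hk => iSup_le fun hj =>
    hk ▸ hj ▸ walkWeight_le_mmPow A p d)
  induction d generalizing k with
  | zero =>
    by_cases h : k = j
    · subst h
      exact le_iSup_of_le (fun _ => k) (le_iSup_of_le rfl (le_iSup_of_le rfl le_top))
    · simp [mmPow, mmId, h]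
  | succ d ih =>
    refine iSup_le fun t => ?_
    refine (inf_le_inf_left _ (ih t)).trans ?_
    rw [inf_iSup_eq]
    refine iSup_le fun p => ?_
    simp only [inf_iSup_eq]
    refine iSup_le fun hp => iSup_le fun hj => ?_
    exact le_iSup_of_le (fun | 0 => k | r + 1 => p r)
      (le_iSup_of_le rfl (le_iSup_of_le hj (by subst hp; rfl)))

end Walks

lemma exists_lt_le_card_eq {α : Type*} [Fintype α] (p : ℕ → α) :
    ∃ s t, s < t ∧ t ≤ Fintype.card α ∧ p s = p t := by
  obtain ⟨i, j, hij, hp⟩ :=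
    Fintype.exists_ne_map_eq_of_card_lt (fun i : Fin (Fintype.card α + 1) => p i) (by simp)
  rcases lt_or_gt_of_ne (Fin.val_ne_of_ne hij) with h | h
  · exact ⟨i, j, h, Nat.lt_succ_iff.mp j.2, hp⟩
  · exact ⟨j, i, h, Nat.lt_succ_iff.mp i.2, hp.symm⟩

section Closures

variable {α : Type*} [Fintype α] [DecidableEq α] (A : Matrix α α B)

lemma mmPow_le_iSup_cycle {m : ℕ} (hm : Fintype.card α ≤ m) (k j : α) :
    mmPow A m k j ≤ ⨆ (s) (t) (_ : s < t ∧ t ≤ Fintype.card α) (a : α),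
      mmPow A s k a ⊓ mmPow A (t - s) a a ⊓ mmPow A (m - t) a j := by
  rw [mmPow_eq_iSup_walkWeight]
  refine iSup_le fun p => iSup_le fun hk => iSup_le fun hj => ?_
  subst hk hj
  obtain ⟨s, t, hst, ht, hp⟩ := exists_lt_le_card_eq p
  refine le_iSup_of_le s (le_iSup_of_le t (le_iSup_of_le ⟨hst, ht⟩ (le_iSup_of_le (p s) ?_)))
  obtain ⟨c, rfl⟩ := Nat.exists_eq_add_of_le hst.le
  obtain ⟨e, rfl⟩ := Nat.exists_eq_add_of_le (ht.trans hm)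
  rw [Nat.add_sub_cancel_left, Nat.add_sub_cancel_left, add_assoc, walkWeight_add,
    walkWeight_add, ← inf_assoc]
  refine inf_le_inf (inf_le_inf (walkWeight_le_mmPow A p s) ?_) ?_
  · simpa [hp] using walkWeight_le_mmPow A (fun r => p (s + r)) c
  · simpa [hp] using walkWeight_le_mmPow A (fun r => p (s + (c + r))) e

lemma mmPow_le_mmStar (m : ℕ) (k j : α) : mmPow A m k j ≤ mmStar A k j := by
  induction m using Nat.strong_induction_on generalizing k j with
  | _ m ih =>
  by_cases hm : m < Fintype.card α
  · exact le_iSup₂_of_le m (Finset.mem_range.2 hm) le_rfl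
  refine (mmPow_le_iSup_cycle A (not_lt.1 hm) k j).trans
    (iSup_le fun s => iSup_le fun t => iSup_le fun ⟨hst, ht⟩ => iSup_le fun a => ?_)
  calc mmPow A s k a ⊓ mmPow A (t - s) a a ⊓ mmPow A (m - t) a j
      ≤ mmPow A s k a ⊓ mmPow A (m - t) a j := inf_le_inf_right _ inf_le_left
    _ ≤ mmPow A (s + (m - t)) k j := mmPow_inf_mmPow_le A _ _ k a j
    _ ≤ mmStar A k j := ih _ (by omega) k j

lemma mmPlus_le_mmStar (k j : α) : mmPlus A k j ≤ mmStar A k j :=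
  iSup₂_le fun m _ => mmPow_le_mmStar A m k j

lemma mmStar_self (i : α) : mmStar A i i = ⊤ :=
  top_le_iff.1 <| le_iSup₂_of_le 0 (Finset.mem_range.2 (Fintype.card_pos_iff.2 ⟨i⟩))
    (by simp [mmPow, mmId]; rfl)

lemma mmStar_le_mmPlus_of_ne {k i : α} (h : k ≠ i) : mmStar A k i ≤ mmPlus A k i := by
  refine iSup₂_le fun m hm => ?_
  cases m with
  | zero => simp [mmPow, mmId, h]
  | succ m =>
    exact le_iSup₂_of_le (m + 1) (by simp at hm ⊢; omega) le_rfl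

lemma mmPlus_inf_mmStar (i k : α) :
    mmPlus A i i ⊓ mmStar A k i = mmPlus A i i ⊓ mmPlus A k i := by
  by_cases h : k = i
  · subst h; rw [mmStar_self, inf_top_eq, inf_idem]
  · exact le_antisymm (inf_le_inf_left _ (mmStar_le_mmPlus_of_ne A h))
      (inf_le_inf_left _ (mmPlus_le_mmStar A k i))

lemma mmMul_mmStar : mmMul A (mmStar A) = mmPlus A := by
  funext k i
  refine le_antisymm (iSup_le fun t => ?_) (iSup₂_le fun m hm => ?_)
  · rw [mmStar, inf_iSup₂_eq]
    exact iSup₂_le fun m hm => le_iSup₂_of_le (m + 1) (by simp at hm ⊢; omega)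
      (le_iSup (fun t => A k t ⊓ mmPow A m t i) t)
  · obtain ⟨m, rfl⟩ := Nat.exists_eq_add_of_le' (Finset.mem_Icc.1 hm).1
    exact iSup_le fun t => le_iSup_of_le t (inf_le_inf_left _
      (le_iSup₂_of_le m (by simp at hm ⊢; omega) le_rfl))

end Closures

section Eigenvectors

variable {α : Type*} [DecidableEq α] (A : Matrix α α B) {x : α → B}

lemma mmVec_mmPow_of_mmVec_eq (hx : mmVec A x = x) (m : ℕ) : mmVec (mmPow A m) x = x := by
  induction m with
  | zero => exact mmVec_mmId x
  | succ m ih => exact (mmVec_mmMul A _ x).trans (by rw [ih, hx])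

lemma mmPow_inf_le_of_mmVec_eq (hx : mmVec A x = x) (m : ℕ) (k i : α) :
    mmPow A m k i ⊓ x i ≤ x k := by
  conv_rhs => rw [← mmVec_mmPow_of_mmVec_eq A hx m]
  exact le_iSup (fun j => mmPow A m k j ⊓ x j) i

variable [Fintype α]

lemma le_iSup_of_mmVec_eq (hx : mmVec A x = x) (k : α) :
    x k ≤ ⨆ i, x i ⊓ mmPlus A i i ⊓ mmStar A k i := by
  conv_lhs => rw [← mmVec_mmPow_of_mmVec_eq A hx (Fintype.card α)]
  refine iSup_le fun j => (inf_le_inf_right _ (mmPow_le_iSup_cycle A le_rfl k j)).trans ?_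
  simp only [iSup_inf_eq]
  refine iSup_le fun s => iSup_le fun t => iSup_le fun ⟨hst, ht⟩ => iSup_le fun a => ?_
  refine le_iSup_of_le a (le_inf (le_inf ?_ ?_) ?_)
  · exact (inf_le_inf_right _ inf_le_right).trans (mmPow_inf_le_of_mmVec_eq A hx _ a j)
  · exact inf_le_left.trans <| inf_le_left.trans <| inf_le_right.trans <|
      le_iSup₂_of_le (t - s) (by simp; omega) le_rfl
  · exact inf_le_left.trans <| inf_le_left.trans <| inf_le_left.trans <| mmPow_le_mmStar A s k a

lemma eq_iSup_of_mmVec_eq (hx : mmVec A x = x) (k : α) :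
    x k = ⨆ i, x i ⊓ mmPlus A i i ⊓ mmStar A k i := by
  refine le_antisymm (le_iSup_of_mmVec_eq A hx k) (iSup_le fun i => ?_)
  refine (inf_le_inf_right _ inf_le_left).trans ?_
  rw [inf_comm, mmStar, iSup₂_inf_eq]
  exact iSup₂_le fun m _ => mmPow_inf_le_of_mmVec_eq A hx m k i

lemma mmVec_eq_of_eq_iSup {y : α → B}
    (hy : ∀ k, x k = ⨆ i, y i ⊓ mmPlus A i i ⊓ mmStar A k i) : mmVec A x = x := by
  funext k
  calc mmVec A x k = ⨆ t, A k t ⊓ ⨆ i, y i ⊓ mmPlus A i i ⊓ mmStar A t i := by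
        simp only [mmVec, ← hy]
    _ = ⨆ i, y i ⊓ mmPlus A i i ⊓ ⨆ t, A k t ⊓ mmStar A t i := by
        simp only [inf_iSup_eq]
        rw [iSup_comm]
        exact iSup_congr fun i => iSup_congr fun t => inf_left_comm _ _ _
    _ = ⨆ i, y i ⊓ mmPlus A i i ⊓ mmPlus A k i := by rw [← mmMul_mmStar]; rfl
    _ = ⨆ i, y i ⊓ mmPlus A i i ⊓ mmStar A k i := by simp only [inf_assoc, mmPlus_inf_mmStar]
    _ = x k := (hy k).symm

end Eigenvectors

/-- The set of principal eigenvectors of `A` is the max-min column space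
generated by the vectors `min ((A⁺)_{ii}, ·) ⊗ (A*)_{·i}`: `A ⊗ x = x` iff there is `y` with
`x k = max_i min (y i, (A⁺)_{ii}, (A*)_{ki})` for all `k`; moreover, for a principal
eigenvector `x` one may take `y = x`. -/
theorem stmt3 {n : ℕ} (A : Matrix (Fin n) (Fin n) B) (x : Fin n → B) :
    (mmVec A x = x ↔
      ∃ y : Fin n → B, ∀ k, x k = ⨆ i, y i ⊓ mmPlus A i i ⊓ mmStar A k i) ∧
    (mmVec A x = x →
      ∀ k, x k = ⨆ i, x i ⊓ mmPlus A i i ⊓ mmStar A k i) :=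
  ⟨⟨fun hx => ⟨x, eq_iSup_of_mmVec_eq A hx⟩, fun ⟨_, hy⟩ => mmVec_eq_of_eq_iSup A hy⟩,
    fun hx => eq_iSup_of_mmVec_eq A hx⟩
end
end

section
/- Let A ∈ B^{m×n}, b ∈ B^m and λ ∈ B over the max-min algebra, with a_{ij} ≤ λ and b_i ≤ λ for all i, j. Then z ∈ B^n solves A ⊗ z ⊕ b = λ·1 if and only if there exists W ⊆ {1,...,n} such that C^W = {C_j : j ∈ W} is a minimal covering of I_0 and z ≥ z^W entrywise. -/
/-!
Since every entry is at most `λ`, row `i` of `A ⊗ z ⊕ b` equals `λ` exactly when `b_i = λ` or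
some `j` has `a_{ij} = λ ≤ z_j`: a finite supremum in a linear order is attained. Hence `z` solves
the equation iff `{j : λ ≤ z_j}` indexes a covering of `I₀`. Coverings are closed under
enlargement, and every covering contains a minimal one because finsets are well-founded under
inclusion.
-/

noncomputable section

section Covering

variable {κ ι α : Type*}

/-- `C^W = {C_j : j ∈ W}` covers `I₀ = {i : b_i < λ}`. -/
def IsCovering [LT α] (A : Matrix κ ι α) (b : κ → α) (lam : α) (W : Finset ι) : Prop :=
  ∀ i, b i < lam → ∃ j ∈ W, A i j = lam

theorem isCovering_iff_setOf_eq_biUnion [LT α] {A : Matrix κ ι α} {b : κ → α} {lam : α}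
    {W : Finset ι} :
    IsCovering A b lam W ↔ {i | b i < lam} = ⋃ j ∈ W, {i | b i < lam ∧ A i j = lam} := by
  simp only [IsCovering, Set.ext_iff, Set.mem_iUnion, Set.mem_ofPred_eq, exists_prop]
  grind

theorem IsCovering.mono [LT α] {A : Matrix κ ι α} {b : κ → α} {lam : α} {W V : Finset ι}
    (hW : IsCovering A b lam W) (hWV : W ⊆ V) : IsCovering A b lam V := fun i hi =>
  let ⟨j, hjW, hj⟩ := hW i hi
  ⟨j, hWV hjW, hj⟩

end Covering

theorem iSup_inf_sup_eq_iff {ι α : Type*} [Fintype ι] [CompleteLinearOrder α] {a z : ι → α}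
    {c lam : α} (ha : ∀ j, a j ≤ lam) (hc : c ≤ lam) :
    (⨆ j, a j ⊓ z j) ⊔ c = lam ↔ (c < lam → ∃ j, a j = lam ∧ lam ≤ z j) := by
  have hle : (⨆ j, a j ⊓ z j) ⊔ c ≤ lam := sup_le (iSup_le fun j => inf_le_left.trans (ha j)) hc
  rw [hle.ge_iff_eq.symm, le_sup_iff, or_iff_not_imp_right, not_le]
  refine imp_congr_right fun hlt => ?_
  rw [← Finset.sup_univ_eq_iSup, Finset.le_sup_iff (bot_le.trans_lt hlt)]
  simp only [Finset.mem_univ, true_and, le_inf_iff, (ha _).ge_iff_eq]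

theorem mmVec_sup_eq_iff_isCovering {κ ι : Type*} [Fintype ι] {A : Matrix κ ι B} {b : κ → B}
    {lam : B} (hA : ∀ i j, A i j ≤ lam) (hb : ∀ i, b i ≤ lam) (z : ι → B) :
    (∀ i, mmVec A z i ⊔ b i = lam) ↔ IsCovering A b lam {j | lam ≤ z j} := by
  simp only [mmVec, iSup_inf_sup_eq_iff (hA _) (hb _), IsCovering, Finset.mem_filter,
    Finset.mem_univ, true_and, and_comm]

theorem forall_ite_le_iff_subset {ι : Type*} [Fintype ι] [DecidableEq ι] {W : Finset ι}
    {lam : B} {z : ι → B} :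
    (∀ j, (if j ∈ W then lam else 0) ≤ z j) ↔ W ⊆ ({j | lam ≤ z j} : Finset ι) := by
  simp only [Finset.subset_iff, Finset.mem_filter, Finset.mem_univ, true_and]
  refine forall_congr' fun j => ?_
  split_ifs with hj <;> simp [hj]

/-- For `A ∈ B^{m×n}`, `b ∈ B^m`, `λ ∈ B` with all entries of `A` and `b`
at most `λ`: a vector `z` solves `A ⊗ z ⊕ b = λ·1` iff `z ≥ z^W` for some `W` such that
`C^W = {C_j : j ∈ W}` is a minimal covering of `I₀ = {i : b_i < λ}`,
where `C_j = {i ∈ I₀ : a_{ij} = λ}`. -/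
theorem stmt5 {m n : ℕ} (A : Matrix (Fin m) (Fin n) B) (b : Fin m → B) (lam : B)
    (hA : ∀ i j, A i j ≤ lam) (hb : ∀ i, b i ≤ lam) (z : Fin n → B) :
    (∀ i, mmVec A z i ⊔ b i = lam) ↔
      ∃ W : Finset (Fin n),
        ({i | b i < lam} = ⋃ j ∈ W, {i | b i < lam ∧ A i j = lam}) ∧
        (∀ V ⊆ W, V ≠ W →
          {i | b i < lam} ≠ ⋃ j ∈ V, {i | b i < lam ∧ A i j = lam}) ∧
        (∀ j, (if j ∈ W then lam else 0) ≤ z j) := by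
  rw [mmVec_sup_eq_iff_isCovering hA hb]
  simp only [ne_eq, ← isCovering_iff_setOf_eq_biUnion, forall_ite_le_iff_subset]
  constructor
  · intro hz
    obtain ⟨W, hWz, hW⟩ := exists_minimal_le_of_wellFoundedLT _ _ hz
    exact ⟨W, hW.prop, fun V hVW hVW' => hW.not_prop_of_lt (hVW.ssubset_of_ne hVW'), hWz⟩
  · rintro ⟨W, hW, -, hWz⟩
    exact hW.mono hWz
end
end

section
/- Let λ ∈ B and W ⊆ N = {1,...,n}, and let S^W = { z ∈ B^n : λ ≤ z_k ≤ 1 for k ∈ W, z_k ≥ 0 for k ∈ N \ W }. Then S^W = { z^W ⊕ Λ^W ⊗ v : v ∈ B^n }, where z^W ∈ B^n has z^W_j = λ for j ∈ W and 0 otherwise, and Λ^W ∈ B^{n×n} has (Λ^W)_{ij} = 1 if i = j and (Λ^W)_{ij} = z^W_i if i ≠ j. -/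
/-! Every point `z` of the box is represented with `v = z`: the diagonal of `Λ^W` is `1`, so
`Λ^W ⊗ z ≥ z`, while its off-diagonal entries in row `i` are `z^W_i`, so `Λ^W ⊗ z ≤ z^W ⊕ z = z`.
Conversely `z^W ⊕ Λ^W ⊗ v ≥ z^W`, and the remaining box constraints hold in `[0,1]` anyway. -/

noncomputable section

section

variable {ι : Type*}

theorem le_mmVec_of_diag_eq_one {A : Matrix ι ι B} (hA : ∀ i, A i i = 1) (v : ι → B) :
    v ≤ mmVec A v := fun i =>
  calc v i = A i i ⊓ v i := by rw [hA, inf_of_le_right unitInterval.le_one']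
    _ ≤ mmVec A v i := le_iSup (fun j => A i j ⊓ v j) i

theorem mmVec_le_sup_of_offDiag_le {A : Matrix ι ι B} {u : ι → B}
    (hA : ∀ i j, i ≠ j → A i j ≤ u i) (v : ι → B) : mmVec A v ≤ u ⊔ v := fun i =>
  iSup_le fun j => by
    rcases eq_or_ne i j with rfl | hij
    · exact inf_le_right.trans le_sup_right
    · exact inf_le_left.trans ((hA i j hij).trans le_sup_left)

theorem sup_mmVec_eq_of_le {A : Matrix ι ι B} {u v : ι → B}
    (hdiag : ∀ i, A i i = 1) (hoff : ∀ i j, i ≠ j → A i j ≤ u i) (huv : u ≤ v) :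
    u ⊔ mmVec A v = v :=
  le_antisymm (sup_le huv ((mmVec_le_sup_of_offDiag_le hoff v).trans (sup_le huv le_rfl)))
    (le_sup_of_le_right (le_mmVec_of_diag_eq_one hdiag v))

variable [DecidableEq ι]

/-- The vector `z^W` of the paper: the lower corner of the box `S^W`. -/
def boxCorner (W : Finset ι) (lam : B) : ι → B := fun i => if i ∈ W then lam else 0

/-- The matrix `Λ^W` of the paper. -/
def boxMatrix (W : Finset ι) (lam : B) : Matrix ι ι B :=
  fun i j => if i = j then 1 else boxCorner W lam i

theorem boxCorner_le_iff {W : Finset ι} {lam : B} {z : ι → B} :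
    boxCorner W lam ≤ z ↔ ∀ k ∈ W, lam ≤ z k := by
  refine ⟨fun h k hk => by simpa [boxCorner, hk] using h k, fun h k => ?_⟩
  by_cases hk : k ∈ W
  · simpa [boxCorner, hk] using h k hk
  · simp [boxCorner, hk]

theorem sup_mmVec_boxMatrix_eq {W : Finset ι} {lam : B} {z : ι → B}
    (hz : boxCorner W lam ≤ z) : boxCorner W lam ⊔ mmVec (boxMatrix W lam) z = z :=
  sup_mmVec_eq_of_le (fun _ => if_pos rfl) (fun _ _ hij => (if_neg hij).le) hz

end

/-- The box `S^W = {z : λ ≤ z_k ≤ 1 for k ∈ W, z_k ≥ 0 for k ∉ W}` equals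
`{ z^W ⊕ Λ^W ⊗ v : v ∈ Bⁿ }`, where `z^W_j = λ` for `j ∈ W` and `0` otherwise, and
`(Λ^W)_{ij} = 1` if `i = j`, `(Λ^W)_{ij} = z^W_i` otherwise. -/
theorem stmt7 {n : ℕ} (lam : B) (W : Finset (Fin n)) (z : Fin n → B) :
    ((∀ k ∈ W, lam ≤ z k ∧ z k ≤ 1) ∧ ∀ k ∉ W, 0 ≤ z k) ↔
      ∃ v : Fin n → B,
        z = fun i => (if i ∈ W then lam else 0) ⊔
          mmVec (fun i j : Fin n =>
            if i = j then 1 else if i ∈ W then lam else 0) v i := by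
  change _ ↔ ∃ v, z = boxCorner W lam ⊔ mmVec (boxMatrix W lam) v
  have hbox : ((∀ k ∈ W, lam ≤ z k ∧ z k ≤ 1) ∧ ∀ k ∉ W, 0 ≤ z k) ↔ boxCorner W lam ≤ z := by
    simp only [boxCorner_le_iff, unitInterval.le_one', unitInterval.nonneg', and_true,
      implies_true]
  rw [hbox]
  exact ⟨fun hz => ⟨z, (sup_mmVec_boxMatrix_eq hz).symm⟩, fun ⟨v, hv⟩ => hv ▸ le_sup_left⟩
end
end

section
/- Let A ∈ B^{n×n} and λ ∈ B over the max-min algebra. The set of background λ-eigenvectors of A (vectors x ∈ B^n with A ⊗ x = λ ⊗ x and x_i ≥ λ for all i) is nonempty if and only if max_{1≤j≤n} a_{ij} ≥ λ for every i ∈ {1,...,n}. -/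
noncomputable section

/-! Entries of `A ⊗ x` never exceed the row maxima of `A`, which gives necessity; conversely the
constant vector `λ` is a background eigenvector, because `min` distributes over `max`:
`max_j min (a_ij, λ) = min (max_j a_ij, λ) = λ`. -/

lemma mmVec_le_iSup_row {α β : Type*} (A : Matrix α β B) (x : β → B) (i : α) :
    mmVec A x i ≤ ⨆ j, A i j :=
  iSup_mono fun _ => inf_le_left

lemma mmVec_const {α β : Type*} (A : Matrix α β B) (c : B) (i : α) :
    mmVec A (fun _ => c) i = (⨆ j, A i j) ⊓ c :=
  (iSup_inf_eq _ _).symm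

/-- The set of background `λ`-eigenvectors of `A` (vectors `x` with
`A ⊗ x = λ ⊗ x` and `x_i ≥ λ` for all `i`) is nonempty iff `max_j a_{ij} ≥ λ` for every `i`. -/
theorem stmt8 {n : ℕ} (A : Matrix (Fin n) (Fin n) B) (lam : B) :
    (∃ x : Fin n → B, mmVec A x = (fun i => lam ⊓ x i) ∧ ∀ i, lam ≤ x i) ↔
      ∀ i, lam ≤ ⨆ j, A i j := by
  constructor
  · rintro ⟨x, hx, hge⟩ i
    calc lam = lam ⊓ x i := (inf_eq_left.2 (hge i)).symm
      _ = mmVec A x i := (congrFun hx i).symm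
      _ ≤ ⨆ j, A i j := mmVec_le_iSup_row A x i
  · intro h
    refine ⟨fun _ => lam, funext fun i => ?_, fun _ => le_rfl⟩
    rw [mmVec_const, inf_eq_right.2 (h i), inf_idem]
end
end

section
/- Let A ∈ B^{n×n} and λ ∈ B over the max-min algebra, and suppose max_{1≤j≤n} a_{ij} ≥ λ for every i. Then the set of background λ-eigenvectors of A equals { x ∈ B^n : x_k = λ for k ∈ N^{>λ}, and λ ≤ x_k ≤ 1 for k ∈ N^{≤λ} }, where N^{>λ} = { k : max_{1≤i≤n} a_{ik} > λ } and N^{≤λ} = { k : max_{1≤i≤n} a_{ik} ≤ λ }. -/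
/-!
For `x ≥ λ` and row maxima `≥ λ`, distributivity gives `A ⊗ x ≥ λ` for free, so `x` is a
background eigenvector iff `A ⊗ x ≤ λ`, i.e. iff `min (a_ik, x_k) ≤ λ` for all `i, k`. In a
linear order this says `x_k ≤ λ` exactly when column `k` has maximum `> λ`.
-/

noncomputable section

section CompleteLinearOrder

variable {α ι κ : Type*} [CompleteLinearOrder α]

theorem forall_iSup_inf_le_iff (A : ι → κ → α) (x : κ → α) (c : α) :
    (∀ i, ⨆ j, A i j ⊓ x j ≤ c) ↔ ∀ j, c < ⨆ i, A i j → x j ≤ c := by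
  have hcol : ∀ j, (∀ i, A i j ⊓ x j ≤ c) ↔ (c < ⨆ i, A i j → x j ≤ c) := fun j => by
    rw [← iSup_le_iff, ← iSup_inf_eq, inf_le_iff, imp_iff_not_or, not_lt]
  simp only [iSup_le_iff]
  exact forall_comm.trans (forall_congr' hcol)

theorem le_iSup_inf_of_le {A : κ → α} {x : κ → α} {c : α} (hA : c ≤ ⨆ j, A j)
    (hx : ∀ j, c ≤ x j) : c ≤ ⨆ j, A j ⊓ x j :=
  calc c = (⨆ j, A j) ⊓ c := (inf_eq_right.mpr hA).symm
    _ = ⨆ j, A j ⊓ c := iSup_inf_eq _ _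
    _ ≤ ⨆ j, A j ⊓ x j := iSup_mono fun j => inf_le_inf_left _ (hx j)

theorem forall_iSup_inf_eq_iff {A : ι → κ → α} {x : κ → α} {c : α}
    (hA : ∀ i, c ≤ ⨆ j, A i j) (hx : ∀ j, c ≤ x j) :
    (∀ i, ⨆ j, A i j ⊓ x j = c) ↔ ∀ j, c < ⨆ i, A i j → x j ≤ c := by
  rw [← forall_iSup_inf_le_iff]
  exact forall_congr' fun i => ⟨le_of_eq, fun h => h.antisymm (le_iSup_inf_of_le (hA i) hx)⟩

end CompleteLinearOrder

/-- If `max_j a_{ij} ≥ λ` for every `i`, then the set of background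
`λ`-eigenvectors of `A` equals
`{x : x_k = λ for k ∈ N^{>λ}, λ ≤ x_k ≤ 1 for k ∈ N^{≤λ}}`, where
`N^{>λ} = {k : max_i a_{ik} > λ}` and `N^{≤λ} = {k : max_i a_{ik} ≤ λ}`. -/
theorem stmt9 {n : ℕ} (A : Matrix (Fin n) (Fin n) B) (lam : B)
    (h : ∀ i, lam ≤ ⨆ j, A i j) (x : Fin n → B) :
    (mmVec A x = (fun i => lam ⊓ x i) ∧ ∀ i, lam ≤ x i) ↔
      ((∀ k, lam < (⨆ i, A i k) → x k = lam) ∧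
       (∀ k, (⨆ i, A i k) ≤ lam → lam ≤ x k ∧ x k ≤ 1)) := by
  have background_iff (hx : ∀ i, lam ≤ x i) :
      mmVec A x = (fun i => lam ⊓ x i) ↔ ∀ i, mmVec A x i = lam := by
    simp only [funext_iff, inf_eq_left.mpr (hx _)]
  constructor
  · rintro ⟨heig, hx⟩
    have hcol := (forall_iSup_inf_eq_iff h hx).mp ((background_iff hx).mp heig)
    exact ⟨fun k hk => (hcol k hk).antisymm (hx k), fun k _ => ⟨hx k, le_top⟩⟩
  · rintro ⟨hgt, hle⟩
    have hx : ∀ k, lam ≤ x k := fun k =>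
      (le_or_gt (⨆ i, A i k) lam).elim (fun hk => (hle k hk).1) fun hk => (hgt k hk).ge
    refine ⟨(background_iff hx).mpr ((forall_iSup_inf_eq_iff h hx).mpr ?_), hx⟩
    exact fun k hk => (hgt k hk).le
end
end

section
/- Let λ ∈ B and let N_1, N_2 partition N = {1,...,n} (N_1 ∪ N_2 = N, N_1 ∩ N_2 = ∅). Let S = { x ∈ B^n : x_k = λ for k ∈ N_1, λ ≤ x_k ≤ 1 for k ∈ N_2 }. Then S = { λ·1 ⊕ Λ_{N,N_2} ⊗ z : z ∈ B^{|N_2|} }, where Λ ∈ B^{n×n} has Λ_{ii} = 1 and Λ_{ij} = λ for i ≠ j, and Λ_{N,N_2} is its submatrix consisting of the columns indexed by N_2. -/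
noncomputable section

theorem sup_iSup_ite_top_inf {α ι : Type*} [CompleteLattice α] [DecidableEq ι]
    (s : Finset ι) (a : α) (z : s → α) (i : ι) :
    a ⊔ ⨆ j : s, (if i = j then ⊤ else a) ⊓ z j = if h : i ∈ s then a ⊔ z ⟨i, h⟩ else a := by
  split_ifs with hi
  · refine le_antisymm (sup_le le_sup_left (iSup_le fun j => ?_)) ?_
    · split_ifs with hij
      · obtain rfl : ⟨i, hi⟩ = j := Subtype.ext hij
        exact le_sup_of_le_right inf_le_right
      · exact le_sup_of_le_left inf_le_left
    · exact sup_le_sup_left (le_iSup_of_le ⟨i, hi⟩ (by simp)) a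
  · refine sup_eq_left.2 (iSup_le fun j => ?_)
    rw [if_neg (by rintro rfl; exact hi j.2)]
    exact inf_le_left

theorem sup_mmVec_ite_apply {ι : Type*} [DecidableEq ι] (lam : B) (s : Finset ι) (z : s → B)
    (i : ι) :
    lam ⊔ mmVec (fun (i : ι) (j : s) => if i = (j : ι) then 1 else lam) z i =
      if h : i ∈ s then lam ⊔ z ⟨i, h⟩ else lam :=
  sup_iSup_ite_top_inf s lam z i

/-- For a partition `N₁ ∪ N₂ = N`, the set
`S = {x : x_k = λ for k ∈ N₁, λ ≤ x_k ≤ 1 for k ∈ N₂}` equals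
`{ λ·1 ⊕ Λ_{N,N₂} ⊗ z : z ∈ B^{|N₂|} }`, where `Λ_{ii} = 1` and `Λ_{ij} = λ` for `i ≠ j`. -/
theorem stmt10 {n : ℕ} (lam : B) (N1 N2 : Finset (Fin n))
    (hU : N1 ∪ N2 = Finset.univ) (hD : Disjoint N1 N2) (x : Fin n → B) :
    ((∀ k ∈ N1, x k = lam) ∧ ∀ k ∈ N2, lam ≤ x k ∧ x k ≤ 1) ↔
      ∃ z : ↥N2 → B,
        x = fun i => lam ⊔
          mmVec (fun (i : Fin n) (j : ↥N2) => if i = (j : Fin n) then 1 else lam) z i := by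
  simp only [funext_iff, sup_mmVec_ite_apply]
  constructor
  · rintro ⟨hN1, hN2⟩
    refine ⟨fun j => x j, fun i => ?_⟩
    split_ifs with hi
    · exact (sup_eq_right.2 (hN2 i hi).1).symm
    · exact hN1 i ((Finset.mem_union.1 (hU ▸ Finset.mem_univ i)).resolve_right hi)
  · rintro ⟨z, hx⟩
    refine ⟨fun k hk => (hx k).trans (dif_neg (Finset.disjoint_left.1 hD hk)),
      fun k hk => ⟨?_, le_top⟩⟩
    rw [hx k, dif_pos hk]
    exact le_sup_left
end
end

section
/- Let A ∈ B^{n×n}, λ ∈ B, K, L a partition of N = {1,...,n}, and let L_1 = { i ∈ L : max_{j∈L} a_{ij} ≥ λ } and L_2 = { i ∈ L : max_{j∈L} a_{ij} < λ }. For vectors x_K ∈ B^K with x_K ≤ λ·1_K and x_L ∈ B^L with x_L ≥ λ·1_L, the equation A_{LK} ⊗ x_K ⊕ A_{LL} ⊗ x_L = λ·1_L holds if and only if both A_{L_1 L} ⊗ x_L = λ·1_{L_1} and A_{L_2 K} ⊗ x_K = λ·1_{L_2} hold. -/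
noncomputable section

/-- Submatrix of `A` with rows in `P` and columns in `Q`. -/
def subM {n : ℕ} (A : Matrix (Fin n) (Fin n) B) (P Q : Finset (Fin n)) :
    Matrix ↥P ↥Q B :=
  fun i j => A i j

/-- Subvector of `x` indexed by `P`. -/
def subV {n : ℕ} (x : Fin n → B) (P : Finset (Fin n)) : ↥P → B :=
  fun i => x i

/-- `x` is a `(K,L)` `λ`-eigenvector of `A`: `A ⊗ x = λ ⊗ x`, `x_i ≤ λ` for `i ∈ K`,
`x_i ≥ λ` for `i ∈ L`. -/
def IsKLEig {n : ℕ} (A : Matrix (Fin n) (Fin n) B) (lam : B) (K L : Finset (Fin n))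
    (x : Fin n → B) : Prop :=
  mmVec A x = (fun i => lam ⊓ x i) ∧ (∀ i ∈ K, x i ≤ lam) ∧ (∀ i ∈ L, lam ≤ x i)

/-- `L₁ = {i ∈ L : max_{j∈L} a_{ij} ≥ λ}`. -/
def L1set {n : ℕ} (A : Matrix (Fin n) (Fin n) B) (lam : B) (L : Finset (Fin n)) :
    Finset (Fin n) :=
  L.filter fun i => lam ≤ ⨆ j ∈ L, A i j

/-- `L₂ = {i ∈ L : max_{j∈L} a_{ij} < λ}`. -/
def L2set {n : ℕ} (A : Matrix (Fin n) (Fin n) B) (lam : B) (L : Finset (Fin n)) :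
    Finset (Fin n) :=
  L.filter fun i => (⨆ j ∈ L, A i j) < lam

theorem sup_eq_iff_left_of_lt {α : Type*} [LinearOrder α] {a b c : α} (hb : b < c) :
    a ⊔ b = c ↔ a = c :=
  ⟨fun h => (le_total a b).elim (fun hab => absurd ((sup_eq_right.2 hab).symm.trans h) hb.ne)
      fun hba => (sup_eq_left.2 hba).symm.trans h,
    fun h => by subst h; exact sup_eq_left.2 hb.le⟩

theorem iSup_inf_le_of_forall_le {α ι : Type*} [CompleteLattice α] {a x : ι → α} {c : α}
    (hx : ∀ j, x j ≤ c) : ⨆ j, a j ⊓ x j ≤ c :=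
  iSup_le fun j => inf_le_right.trans (hx j)

theorem iSup_inf_lt_of_iSup_lt {α ι : Type*} [CompleteLattice α] {a x : ι → α} {c : α}
    (ha : ⨆ j, a j < c) : ⨆ j, a j ⊓ x j < c :=
  (iSup_mono fun _ => inf_le_left).trans_lt ha

theorem le_iSup_inf_of_forall_le {α ι : Type*} [Order.Frame α] {a x : ι → α} {c : α}
    (hx : ∀ j, c ≤ x j) (ha : c ≤ ⨆ j, a j) : c ≤ ⨆ j, a j ⊓ x j :=
  calc c = (⨆ j, a j) ⊓ c := (inf_eq_right.2 ha).symm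
    _ = ⨆ j, a j ⊓ c := iSup_inf_eq _ _
    _ ≤ ⨆ j, a j ⊓ x j := iSup_mono fun j => inf_le_inf_left _ (hx j)

/-- The left term never exceeds `c`, and the right one reaches `c` exactly when `c ≤ ⨆ j, b j`. -/
theorem iSup_inf_sup_iSup_inf_eq_iff {α ι κ : Type*} [CompleteLinearOrder α]
    {a x : κ → α} {b y : ι → α} {c : α} (hx : ∀ j, x j ≤ c) (hy : ∀ j, c ≤ y j) :
    (⨆ j, a j ⊓ x j) ⊔ (⨆ j, b j ⊓ y j) = c ↔
      (c ≤ ⨆ j, b j → ⨆ j, b j ⊓ y j = c) ∧ ((⨆ j, b j) < c → ⨆ j, a j ⊓ x j = c) := by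
  rcases le_or_gt c (⨆ j, b j) with hb | hb
  · have hst := (iSup_inf_le_of_forall_le (a := a) hx).trans (le_iSup_inf_of_forall_le hy hb)
    simp only [hb, hb.not_gt, sup_eq_right.2 hst, forall_const, IsEmpty.forall_iff, and_true]
  · simp only [hb, hb.not_ge, sup_eq_iff_left_of_lt (iSup_inf_lt_of_iSup_lt hb),
      forall_const, IsEmpty.forall_iff, true_and]

theorem mmVec_subM {n : ℕ} (A : Matrix (Fin n) (Fin n) B) (P Q : Finset (Fin n)) (x : ↥Q → B)
    (i : ↥P) : mmVec (subM A P Q) x i = ⨆ j : ↥Q, A i j ⊓ x j :=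
  rfl

theorem stmt14_general {n : ℕ} (A : Matrix (Fin n) (Fin n) B) (lam : B) (K L : Finset (Fin n))
    (xK : ↥K → B) (xL : ↥L → B)
    (hxK : ∀ i, xK i ≤ lam) (hxL : ∀ i, lam ≤ xL i) :
    (∀ i : ↥L, mmVec (subM A L K) xK i ⊔ mmVec (subM A L L) xL i = lam) ↔
      ((∀ i : ↥(L1set A lam L), mmVec (subM A (L1set A lam L) L) xL i = lam) ∧
       (∀ i : ↥(L2set A lam L), mmVec (subM A (L2set A lam L) K) xK i = lam)) := by
  simp only [mmVec_subM, Subtype.forall, L1set, L2set, Finset.mem_filter, and_imp,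
    ← forall_and, iSup_subtype']
  exact forall₂_congr fun i _ => iSup_inf_sup_iSup_inf_eq_iff hxK hxL

/-- For `x_K ≤ λ·1_K` and `x_L ≥ λ·1_L`, the equation
`A_{LK} ⊗ x_K ⊕ A_{LL} ⊗ x_L = λ·1_L` holds iff both `A_{L₁L} ⊗ x_L = λ·1_{L₁}` and
`A_{L₂K} ⊗ x_K = λ·1_{L₂}` hold. -/
theorem stmt14 {n : ℕ} (A : Matrix (Fin n) (Fin n) B) (lam : B) (K L : Finset (Fin n))
    (hU : K ∪ L = Finset.univ) (hD : Disjoint K L)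
    (xK : ↥K → B) (xL : ↥L → B)
    (hxK : ∀ i, xK i ≤ lam) (hxL : ∀ i, lam ≤ xL i) :
    (∀ i : ↥L, mmVec (subM A L K) xK i ⊔ mmVec (subM A L L) xL i = lam) ↔
      ((∀ i : ↥(L1set A lam L), mmVec (subM A (L1set A lam L) L) xL i = lam) ∧
       (∀ i : ↥(L2set A lam L), mmVec (subM A (L2set A lam L) K) xK i = lam)) :=
  stmt14_general A lam K L xK xL hxK hxL
end
end
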